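/- Let Σ₀, Σ₁ be symmetric positive definite, μ₀, μ₁ ∈ ℝⁿ, A = log(Σ₀^{-1/2}(Σ₀^{1/2} Σ₁ Σ₀^{1/2})^{1/2} Σ₀^{-1/2}), and b = ((e^{A} − I) A⁺ + P_A)^{-1}(μ₁ − e^{A} μ₀). Then bᵀ P_A b = ‖P_A (μ₁ − μ₀)‖². -/

import Mathlib

open Matrix MeasureTheory ProbabilityTheory
open scoped Classical

noncomputable section

/-- Moore–Penrose pseudoinverse `A⁺` of a real square matrix: the unique `B` with
`A B A = A`, `B A B = B`, and `A B`, `B A` symmetric. -/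
def pinv {n : ℕ} (A : Matrix (Fin n) (Fin n) ℝ) : Matrix (Fin n) (Fin n) ℝ :=
  if h : ∃ B : Matrix (Fin n) (Fin n) ℝ,
      A * B * A = A ∧ B * A * B = B ∧ (A * B)ᵀ = A * B ∧ (B * A)ᵀ = B * A
  then h.choose else 0

/-- `P_A = I - A A⁺`, the orthogonal projection onto the null space of `A`. -/
def nullProj {n : ℕ} (A : Matrix (Fin n) (Fin n) ℝ) : Matrix (Fin n) (Fin n) ℝ :=
  1 - A * pinv A

/-- The matrix exponential `e^A`. -/
def mexp {n : ℕ} (A : Matrix (Fin n) (Fin n) ℝ) : Matrix (Fin n) (Fin n) ℝ :=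
  NormedSpace.exp A

/-- The (symmetric) positive semidefinite square root of a positive semidefinite matrix
(junk value `0` if no such root exists). -/
def msqrt {n : ℕ} (S : Matrix (Fin n) (Fin n) ℝ) : Matrix (Fin n) (Fin n) ℝ :=
  if h : ∃ B : Matrix (Fin n) (Fin n) ℝ, B.PosSemidef ∧ B * B = S then h.choose else 0

/-- The matrix logarithm of a symmetric positive definite matrix: the unique symmetric `A`
with `e^A = S` (junk value `0` if no such `A` exists). -/
def matLog {n : ℕ} (S : Matrix (Fin n) (Fin n) ℝ) : Matrix (Fin n) (Fin n) ℝ :=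
  if h : ∃ A : Matrix (Fin n) (Fin n) ℝ, A.IsSymm ∧ mexp A = S then h.choose else 0

/-- The quadratic potential `f(x) = ½ xᵀ A x + bᵀ x`. -/
def quadf {n : ℕ} (A : Matrix (Fin n) (Fin n) ℝ) (b x : Fin n → ℝ) : ℝ :=
  (1 / 2) * (x ⬝ᵥ (A *ᵥ x)) + b ⬝ᵥ x

/-- Squared Euclidean norm `‖v‖²` on `ℝⁿ`. -/
def sqNorm {n : ℕ} (v : Fin n → ℝ) : ℝ := ∑ i, (v i) ^ 2

/-- Squared Frobenius norm `‖M‖_F²`. -/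
def frobSq {n : ℕ} (M : Matrix (Fin n) (Fin n) ℝ) : ℝ := ∑ i, ∑ j, (M i j) ^ 2

/-- The flow map `φ : (t, x₀) ↦ x(t)` of the ODE `ẋ = A x + b`, `x(0) = x₀`. -/
def flowMap {n : ℕ} (A : Matrix (Fin n) (Fin n) ℝ) (b : Fin n → ℝ) :
    ℝ → (Fin n → ℝ) → (Fin n → ℝ) :=
  if h : ∃ φ : ℝ → (Fin n → ℝ) → (Fin n → ℝ),
      (∀ x₀, φ 0 x₀ = x₀) ∧ ∀ x₀ t, HasDerivAt (fun s => φ s x₀) (A *ᵥ (φ t x₀) + b) t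
  then h.choose else fun _ x => x

/-- The standard Gaussian measure on `ℝⁿ`. -/
def stdGaussianPi (n : ℕ) : Measure (Fin n → ℝ) :=
  Measure.pi fun _ => gaussianReal 0 1

/-- The multivariate Gaussian measure `N(μ, Σ)` on `ℝⁿ` (for `Σ` positive semidefinite),
realized as the pushforward of the standard Gaussian by `x ↦ μ + √Σ x`. -/
def multiGaussian {n : ℕ} (μ : Fin n → ℝ) (S : Matrix (Fin n) (Fin n) ℝ) :
    Measure (Fin n → ℝ) :=
  (stdGaussianPi n).map (fun x => μ + (msqrt S) *ᵥ x)

/-- The Wasserstein KL-divergence `D_WKL(μ‖ν)`: for the quadratic potential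
`f(x) = ½ xᵀ A x + bᵀ x` (`A` symmetric) whose gradient flow `φ` pushes `μ` forward to `ν`
at time 1, it is `∫ ∫₀¹ (f(φ₁ x) - f(φ_t x)) dt dμ(x)` (junk value `0` if no such `f`). -/
def DWKL {n : ℕ} (μ ν : Measure (Fin n → ℝ)) : ℝ :=
  if h : ∃ p : Matrix (Fin n) (Fin n) ℝ × (Fin n → ℝ),
      p.1.IsSymm ∧ μ.map (flowMap p.1 p.2 1) = ν then
    ∫ x, (∫ t in (0:ℝ)..1,
        (quadf h.choose.1 h.choose.2 (flowMap h.choose.1 h.choose.2 1 x)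
          - quadf h.choose.1 h.choose.2 (flowMap h.choose.1 h.choose.2 t x))) ∂μ
  else 0

/-- The flow map of the one-dimensional ODE `ẋ = a x + b`. -/
def flow1 (a b : ℝ) : ℝ → ℝ → ℝ :=
  if h : ∃ φ : ℝ → ℝ → ℝ,
      (∀ x₀, φ 0 x₀ = x₀) ∧ ∀ x₀ t, HasDerivAt (fun s => φ s x₀) (a * φ t x₀ + b) t
  then h.choose else fun _ x => x

/-- The quadratic potential `f(x) = ½ a x² + b x` on `ℝ`. -/
def quad1 (a b x : ℝ) : ℝ := (1 / 2) * a * x ^ 2 + b * x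

/-- The Wasserstein KL-divergence for measures on `ℝ`. -/
def DWKL1 (μ ν : Measure ℝ) : ℝ :=
  if h : ∃ p : ℝ × ℝ, μ.map (flow1 p.1 p.2 1) = ν then
    ∫ x, (∫ t in (0:ℝ)..1,
        (quad1 h.choose.1 h.choose.2 (flow1 h.choose.1 h.choose.2 1 x)
          - quad1 h.choose.1 h.choose.2 (flow1 h.choose.1 h.choose.2 t x))) ∂μ
  else 0

end

/-! Since `A` is symmetric, `A⁺`, `P_A`, `e^A` and the matrix `M = (e^A - 1) A⁺ + P_A` are all
functions of `A` in the sense of the functional calculus: `x⁻¹`, `1 - x x⁻¹`, `eˣ` and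
`(eˣ - 1) x⁻¹ + (1 - x x⁻¹)`. Pointwise, `1 - x x⁻¹` vanishes off `x = 0`, where the other two
functions equal `1`; hence `P_A M⁻¹ = P_A = P_A e^A`, so `P_A b = P_A (μ₁ - μ₀)`, and since `P_A` is an
orthogonal projection, `bᵀ P_A b = ‖P_A b‖²`. -/

open Matrix

section MoorePenrose

variable {m R : Type*} [Fintype m] [CommRing R]

def IsMoorePenroseInverse (A B : Matrix m m R) : Prop :=
  A * B * A = A ∧ B * A * B = B ∧ (A * B)ᵀ = A * B ∧ (B * A)ᵀ = B * A

theorem IsMoorePenroseInverse.mul_left_eq {A B C : Matrix m m R}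
    (hB : IsMoorePenroseInverse A B) (hC : IsMoorePenroseInverse A C) : A * B = A * C :=
  calc A * B = (A * C * A) * B := by rw [hC.1]
    _ = (A * C)ᵀ * (A * B)ᵀ := by rw [hC.2.2.1, hB.2.2.1, Matrix.mul_assoc (A * C)]
    _ = Cᵀ * (A * B * A)ᵀ := by simp only [transpose_mul, Matrix.mul_assoc]
    _ = A * C := by rw [hB.1, ← transpose_mul, hC.2.2.1]

theorem IsMoorePenroseInverse.mul_right_eq {A B C : Matrix m m R}
    (hB : IsMoorePenroseInverse A B) (hC : IsMoorePenroseInverse A C) : B * A = C * A :=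
  calc B * A = B * (A * C * A) := by rw [hC.1]
    _ = (B * A)ᵀ * (C * A)ᵀ := by rw [hB.2.2.2, hC.2.2.2, Matrix.mul_assoc, Matrix.mul_assoc]
    _ = (A * B * A)ᵀ * Cᵀ := by simp only [transpose_mul, Matrix.mul_assoc]
    _ = C * A := by rw [hB.1, ← transpose_mul, hC.2.2.2]

theorem IsMoorePenroseInverse.unique {A B C : Matrix m m R}
    (hB : IsMoorePenroseInverse A B) (hC : IsMoorePenroseInverse A C) : B = C :=
  calc B = B * A * B := hB.2.1.symm
    _ = C * A * C := by
      rw [hB.mul_right_eq hC, Matrix.mul_assoc, hB.mul_left_eq hC, ← Matrix.mul_assoc]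
    _ = C := hC.2.1

end MoorePenrose

theorem pinv_eq_of_isMoorePenroseInverse {n : ℕ} {A B : Matrix (Fin n) (Fin n) ℝ}
    (hB : IsMoorePenroseInverse A B) : pinv A = B := by
  unfold pinv
  split_ifs with hex
  · exact IsMoorePenroseInverse.unique hex.choose_spec hB
  · exact absurd ⟨B, hB⟩ hex

theorem isSymm_matLog {n : ℕ} (S : Matrix (Fin n) (Fin n) ℝ) : (matLog S).IsSymm := by
  rw [matLog]
  split_ifs with h
  · exact h.choose_spec.1
  · exact isSymm_zero

theorem dotProduct_mulVec_eq_of_isSymm_of_isIdempotentElem {m R : Type*} [Fintype m]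
    [CommSemiring R] {P : Matrix m m R} (hsymm : P.IsSymm) (hidem : IsIdempotentElem P)
    (v : m → R) : v ⬝ᵥ (P *ᵥ v) = (P *ᵥ v) ⬝ᵥ (P *ᵥ v) := by
  conv_lhs => rw [← hidem.eq, ← mulVec_mulVec, dotProduct_mulVec, ← mulVec_transpose, hsymm.eq]

theorem sqNorm_eq_dotProduct_self {n : ℕ} (v : Fin n → ℝ) : sqNorm v = v ⬝ᵥ v := by
  simp only [sqNorm, dotProduct, sq]

theorem Matrix.isSelfAdjoint_iff_isSymm {m α : Type*} [Star α] [TrivialStar α]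
    {A : Matrix m m α} : IsSelfAdjoint A ↔ A.IsSymm :=
  isHermitian_iff_isSymm

section SymmetricReal

variable {n : ℕ} {A : Matrix (Fin n) (Fin n) ℝ}

theorem continuousOn_spectrum (f : ℝ → ℝ) (A : Matrix (Fin n) (Fin n) ℝ) :
    ContinuousOn f (spectrum ℝ A) :=
  (finite_spectrum A).continuousOn f

theorem cfc_mul_cfc (f g : ℝ → ℝ) (A : Matrix (Fin n) (Fin n) ℝ) :
    cfc f A * cfc g A = cfc (fun x => f x * g x) A :=
  (cfc_mul f g A (continuousOn_spectrum f A) (continuousOn_spectrum g A)).symm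

theorem isSymm_cfc (f : ℝ → ℝ) (A : Matrix (Fin n) (Fin n) ℝ) : (cfc f A).IsSymm :=
  isSelfAdjoint_iff_isSymm.mp (cfc_predicate f A)

theorem self_mul_cfc (hA : A.IsSymm) (f : ℝ → ℝ) : A * cfc f A = cfc (fun x => x * f x) A :=
  calc A * cfc f A = cfc (fun x => x) A * cfc f A := by
        rw [cfc_id' ℝ A (isSelfAdjoint_iff_isSymm.mpr hA)]
    _ = cfc (fun x => x * f x) A := cfc_mul_cfc _ f A

theorem cfc_mul_self (hA : A.IsSymm) (f : ℝ → ℝ) : cfc f A * A = cfc (fun x => f x * x) A :=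
  calc cfc f A * A = cfc f A * cfc (fun x => x) A := by
        rw [cfc_id' ℝ A (isSelfAdjoint_iff_isSymm.mpr hA)]
    _ = cfc (fun x => f x * x) A := cfc_mul_cfc f _ A

/-- Over `ℝ`, `0⁻¹ = 0`, so `x ↦ x⁻¹` is the scalar Moore–Penrose inverse. -/
theorem isMoorePenroseInverse_cfc_inv (hA : A.IsSymm) :
    IsMoorePenroseInverse A (cfc (·⁻¹ : ℝ → ℝ) A) := by
  refine ⟨?_, ?_, ?_, ?_⟩
  · rw [self_mul_cfc hA, cfc_mul_self hA]
    conv_rhs => rw [← cfc_id' ℝ A (isSelfAdjoint_iff_isSymm.mpr hA)]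
    exact cfc_congr fun x _ => mul_inv_mul_cancel x
  · rw [cfc_mul_self hA, cfc_mul_cfc]
    exact cfc_congr fun x _ => by simpa using mul_inv_mul_cancel x⁻¹
  · rw [self_mul_cfc hA]
    exact (isSymm_cfc _ A).eq
  · rw [cfc_mul_self hA]
    exact (isSymm_cfc _ A).eq

theorem pinv_eq_cfc_inv (hA : A.IsSymm) : pinv A = cfc (·⁻¹ : ℝ → ℝ) A :=
  pinv_eq_of_isMoorePenroseInverse (isMoorePenroseInverse_cfc_inv hA)

theorem nullProj_eq_cfc (hA : A.IsSymm) : nullProj A = cfc (fun x : ℝ => 1 - x * x⁻¹) A := by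
  rw [cfc_sub _ _ A (continuousOn_spectrum _ A) (continuousOn_spectrum _ A), cfc_const_one ℝ A,
    nullProj, pinv_eq_cfc_inv hA, self_mul_cfc hA]

theorem mexp_eq_cfc_exp (hA : A.IsSymm) : mexp A = cfc Real.exp A := by
  have hA' : IsSelfAdjoint A := isSelfAdjoint_iff_isSymm.mpr hA
  -- the `ℓ∞` operator norm induces the product topology, so these instances agree with the
  -- ones used by `mexp` and by the functional calculus
  let _ : NormedRing (Matrix (Fin n) (Fin n) ℝ) := Matrix.linftyOpNormedRing
  let _ : NormedAlgebra ℝ (Matrix (Fin n) (Fin n) ℝ) := Matrix.linftyOpNormedAlgebra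
  exact (@CFC.real_exp_eq_normedSpace_exp _ _ _ _
    Matrix.IsHermitian.instContinuousFunctionalCalculus A hA').symm

theorem isSymm_nullProj (hA : A.IsSymm) : (nullProj A).IsSymm :=
  nullProj_eq_cfc hA ▸ isSymm_cfc _ A

theorem isIdempotentElem_nullProj (hA : A.IsSymm) : IsIdempotentElem (nullProj A) := by
  rw [IsIdempotentElem, nullProj_eq_cfc hA, cfc_mul_cfc]
  exact cfc_congr fun x _ => by by_cases hx : x = 0 <;> simp [hx]

theorem nullProj_mul_mexp (hA : A.IsSymm) : nullProj A * mexp A = nullProj A := by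
  rw [nullProj_eq_cfc hA, mexp_eq_cfc_exp hA, cfc_mul_cfc]
  exact cfc_congr fun x _ => by by_cases hx : x = 0 <;> simp [hx]

theorem nullProj_mul_inv_eq (hA : A.IsSymm) :
    nullProj A * ((mexp A - 1) * pinv A + nullProj A)⁻¹ = nullProj A := by
  set m : ℝ → ℝ := fun x => (Real.exp x - 1) * x⁻¹ + (1 - x * x⁻¹)
  have hM : (mexp A - 1) * pinv A + nullProj A = cfc m A := by
    rw [cfc_add A _ _ (continuousOn_spectrum _ A) (continuousOn_spectrum _ A), ← cfc_mul_cfc,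
      cfc_sub _ _ A (continuousOn_spectrum _ A) (continuousOn_spectrum _ A), cfc_const_one ℝ A,
      mexp_eq_cfc_exp hA, pinv_eq_cfc_inv hA, nullProj_eq_cfc hA]
  have hunit : IsUnit (cfc m A).det := by
    rw [← isUnit_iff_isUnit_det, isUnit_cfc_iff _ A (continuousOn_spectrum _ A)
      (isSelfAdjoint_iff_isSymm.mpr hA)]
    intro x _
    by_cases hx : x = 0 <;> simp [m, hx, sub_eq_zero, Real.exp_eq_one_iff]
  have hPM : nullProj A * cfc m A = nullProj A := by
    rw [nullProj_eq_cfc hA, cfc_mul_cfc]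
    exact cfc_congr fun x _ => by by_cases hx : x = 0 <;> simp [m, hx]
  rw [hM]
  calc nullProj A * (cfc m A)⁻¹ = nullProj A * cfc m A * (cfc m A)⁻¹ := by rw [hPM]
    _ = nullProj A := by rw [Matrix.mul_assoc, mul_nonsing_inv _ hunit, Matrix.mul_one]

end SymmetricReal

theorem stmt13_general {n : ℕ} (μ₀ μ₁ : Fin n → ℝ) (S₀ S₁ : Matrix (Fin n) (Fin n) ℝ)
    (A : Matrix (Fin n) (Fin n) ℝ)
    (hA : A = matLog ((msqrt S₀)⁻¹ * msqrt (msqrt S₀ * S₁ * msqrt S₀) * (msqrt S₀)⁻¹))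
    (b : Fin n → ℝ)
    (hb : b = ((mexp A - 1) * pinv A + nullProj A)⁻¹ *ᵥ (μ₁ - mexp A *ᵥ μ₀)) :
    b ⬝ᵥ (nullProj A *ᵥ b) = sqNorm (nullProj A *ᵥ (μ₁ - μ₀)) := by
  have hsymm : A.IsSymm := by
    rw [hA]
    exact isSymm_matLog _
  have hPb : nullProj A *ᵥ b = nullProj A *ᵥ (μ₁ - μ₀) := by
    rw [hb, mulVec_mulVec, nullProj_mul_inv_eq hsymm, mulVec_sub, mulVec_sub, mulVec_mulVec,
      nullProj_mul_mexp hsymm]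
  rw [dotProduct_mulVec_eq_of_isSymm_of_isIdempotentElem (isSymm_nullProj hsymm)
    (isIdempotentElem_nullProj hsymm), hPb, sqNorm_eq_dotProduct_self]

/-- The null-space term: `bᵀ P_A b = ‖P_A (μ₁ − μ₀)‖²`. -/
theorem stmt13 {n : ℕ} (μ₀ μ₁ : Fin n → ℝ) (S₀ S₁ : Matrix (Fin n) (Fin n) ℝ)
    (h₀ : S₀.PosDef) (h₁ : S₁.PosDef) (A : Matrix (Fin n) (Fin n) ℝ)
    (hA : A = matLog ((msqrt S₀)⁻¹ * msqrt (msqrt S₀ * S₁ * msqrt S₀) * (msqrt S₀)⁻¹))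
    (b : Fin n → ℝ)
    (hb : b = ((mexp A - 1) * pinv A + nullProj A)⁻¹ *ᵥ (μ₁ - mexp A *ᵥ μ₀)) :
    b ⬝ᵥ (nullProj A *ᵥ b) = sqNorm (nullProj A *ᵥ (μ₁ - μ₀)) :=
  stmt13_general μ₀ μ₁ S₀ S₁ A hA b hb
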